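/- arXiv:2301.08907 — 5 statements merged into one kernel-verified Lean document; each statement's English description precedes it below -/
import Mathlib

section
/- Let m ≥ 2, n ≥ 1 and let π_crit = min_{r ∈ (0,1]} Π(r) where Π(r) = (1 - (1 - r^{1/m})^{1/n}) / r. Then for every π < π_crit, the only fixed point of F(r) = (1 - (1 - π·r)^n)^m in [0,1] is r = 0. -/
/-!
If `r > 0` is a fixed point of `F`, then `x = π r` lies in `[0,1]` and `F` can be inverted
root by root: `r^{1/m} = 1 - (1 - x)^n` and `(1 - r^{1/m})^{1/n} = 1 - x`, so `Π(r) = π`.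
This contradicts `π < π_crit ≤ Π(r)`. That `π r ≤ 1` comes from `π < π_crit ≤ Π(1) = 1`.
-/

/-- The paper's `Π(r)`; `π_crit` is its minimum over `(0,1]`. -/
noncomputable def criticalRatio (m n : ℕ) (r : ℝ) : ℝ :=
  (1 - (1 - r ^ (1 / (m:ℝ))) ^ (1 / (n:ℝ))) / r

lemma criticalRatio_one (m : ℕ) {n : ℕ} (hn : n ≠ 0) : criticalRatio m n 1 = 1 := by
  have hn' : (n:ℝ)⁻¹ ≠ 0 := by positivity
  simp [criticalRatio, Real.zero_rpow hn']

lemma one_sub_rpow_inv_one_sub_rpow_inv {m n : ℕ} (hm : m ≠ 0) (hn : n ≠ 0) {x : ℝ}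
    (hx0 : 0 ≤ x) (hx1 : x ≤ 1) :
    1 - (1 - ((1 - (1 - x) ^ n) ^ m) ^ (1 / (m:ℝ))) ^ (1 / (n:ℝ)) = x := by
  have hy0 : 0 ≤ 1 - (1 - x) ^ n := sub_nonneg.2 (pow_le_one₀ (by linarith) (by linarith))
  rw [one_div, Real.pow_rpow_inv_natCast hy0 hm, sub_sub_cancel, one_div,
    Real.pow_rpow_inv_natCast (by linarith) hn, sub_sub_cancel]

lemma criticalRatio_eq_of_fixedPoint {m n : ℕ} (hm : m ≠ 0) (hn : n ≠ 0) {π r : ℝ}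
    (hπr0 : 0 ≤ π * r) (hπr1 : π * r ≤ 1) (hr : r ≠ 0) (hfix : (1 - (1 - π * r) ^ n) ^ m = r) :
    criticalRatio m n r = π := by
  have hnum := one_sub_rpow_inv_one_sub_rpow_inv hm hn hπr0 hπr1
  rw [hfix] at hnum
  rw [criticalRatio, hnum, mul_div_cancel_right₀ π hr]

theorem stmt_5_general (m n : ℕ) (hm : 2 ≤ m) (hn : 1 ≤ n) (rc : ℝ)
    (hmin : ∀ r ∈ Set.Ioc (0:ℝ) 1,
      (1 - (1 - rc ^ (1 / (m:ℝ))) ^ (1 / (n:ℝ))) / rc ≤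
      (1 - (1 - r ^ (1 / (m:ℝ))) ^ (1 / (n:ℝ))) / r)
    (π : ℝ) (hπ0 : 0 < π)
    (hπ : π < (1 - (1 - rc ^ (1 / (m:ℝ))) ^ (1 / (n:ℝ))) / rc) :
    ∀ r ∈ Set.Icc (0:ℝ) 1, (1 - (1 - π * r) ^ n) ^ m = r → r = 0 := by
  rintro r ⟨hr0, hr1⟩ hfix
  by_contra hr
  have hmin' : ∀ r ∈ Set.Ioc (0:ℝ) 1, criticalRatio m n rc ≤ criticalRatio m n r := hmin
  have hπ1 : π < 1 := by
    have := hmin' 1 ⟨one_pos, le_rfl⟩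
    rw [criticalRatio_one m (by omega)] at this
    exact hπ.trans_le this
  have hratio : criticalRatio m n r = π :=
    criticalRatio_eq_of_fixedPoint (by omega) (by omega) (by positivity) (by nlinarith) hr hfix
  have := hmin' r ⟨lt_of_le_of_ne hr0 (Ne.symm hr), hr1⟩
  rw [hratio] at this
  exact absurd hπ this.not_gt

/-- Below the critical culture strength `π_crit = min_{r ∈ (0,1]} Π(r)`,
the only fixed point of `F(r) = (1 - (1 - π r)^n)^m` in `[0,1]` is `r = 0`. -/
theorem stmt_5 (m n : ℕ) (hm : 2 ≤ m) (hn : 1 ≤ n) (rc : ℝ) (hrc : rc ∈ Set.Ioc (0:ℝ) 1)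
    (hmin : ∀ r ∈ Set.Ioc (0:ℝ) 1,
      (1 - (1 - rc ^ (1 / (m:ℝ))) ^ (1 / (n:ℝ))) / rc ≤
      (1 - (1 - r ^ (1 / (m:ℝ))) ^ (1 / (n:ℝ))) / r)
    (π : ℝ) (hπ0 : 0 < π)
    (hπ : π < (1 - (1 - rc ^ (1 / (m:ℝ))) ^ (1 / (n:ℝ))) / rc) :
    ∀ r ∈ Set.Icc (0:ℝ) 1, (1 - (1 - π * r) ^ n) ^ m = r → r = 0 :=
  stmt_5_general m n hm hn rc hmin π hπ0 hπ
end

section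
/- Let m ≥ 2, n ≥ 1 and π_crit = min_{r ∈ (0,1]} Π(r). For every π ∈ [π_crit, 1], there exists r > 0 with Π(r) = π, i.e., F(r) = (1-(1-πr)^n)^m has a strictly positive fixed point; hence the reliability ρ(π), defined as the maximal fixed point of F in [0,1], is strictly positive for π ≥ π_crit. -/
lemma stmt6_fixed (m n : ℕ) (hm : 2 ≤ m) (hn : 1 ≤ n) (π r : ℝ)
    (hr0 : 0 < r) (hr1 : r ≤ 1)
    (hf : (1 - (1 - r ^ (1 / (m:ℝ))) ^ (1 / (n:ℝ))) / r = π) :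
    (1 - (1 - π * r) ^ n) ^ m = r := by
  have hmR : (0:ℝ) < (m:ℝ) := by positivity
  have hnR : (0:ℝ) < (n:ℝ) := by exact_mod_cast Nat.lt_of_lt_of_le Nat.zero_lt_one hn
  have hx : (0:ℝ) ≤ 1 - r ^ (1 / (m:ℝ)) := by
    have : r ^ (1 / (m:ℝ)) ≤ 1 :=
      Real.rpow_le_one (le_of_lt hr0) hr1 (by positivity)
    linarith
  have hπr : π * r = 1 - (1 - r ^ (1 / (m:ℝ))) ^ (1 / (n:ℝ)) := by
    field_simp at hf
    linarith
  have h1 : 1 - π * r = (1 - r ^ (1 / (m:ℝ))) ^ (1 / (n:ℝ)) := by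
    rw [hπr]; ring
  have h2 : (1 - π * r) ^ n = 1 - r ^ (1 / (m:ℝ)) := by
    rw [h1, ← Real.rpow_natCast ((1 - r ^ (1 / (m:ℝ))) ^ (1 / (n:ℝ))) n,
      ← Real.rpow_mul hx, one_div_mul_cancel (ne_of_gt hnR), Real.rpow_one]
  rw [h2]
  have : (1:ℝ) - (1 - r ^ (1 / (m:ℝ))) = r ^ (1 / (m:ℝ)) := by ring
  rw [this, ← Real.rpow_natCast (r ^ (1 / (m:ℝ))) m, ← Real.rpow_mul (le_of_lt hr0),
    one_div_mul_cancel (ne_of_gt hmR), Real.rpow_one]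

/-- For every `π ∈ [π_crit, 1]` there is a strictly positive `r` with `Π(r) = π`,
i.e. a strictly positive fixed point of `F`; hence the maximal fixed point of
`F` in `[0,1]` (the reliability `ρ(π)`) is strictly positive. -/
theorem stmt_6 (m n : ℕ) (hm : 2 ≤ m) (hn : 1 ≤ n) (rc : ℝ) (hrc : rc ∈ Set.Ioc (0:ℝ) 1)
    (hmin : ∀ r ∈ Set.Ioc (0:ℝ) 1,
      (1 - (1 - rc ^ (1 / (m:ℝ))) ^ (1 / (n:ℝ))) / rc ≤
      (1 - (1 - r ^ (1 / (m:ℝ))) ^ (1 / (n:ℝ))) / r)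
    (π : ℝ)
    (hπ : π ∈ Set.Icc ((1 - (1 - rc ^ (1 / (m:ℝ))) ^ (1 / (n:ℝ))) / rc) 1) :
    (∃ r : ℝ, 0 < r ∧ r ≤ 1 ∧
      (1 - (1 - r ^ (1 / (m:ℝ))) ^ (1 / (n:ℝ))) / r = π ∧
      (1 - (1 - π * r) ^ n) ^ m = r) ∧
    ∀ ρ ∈ Set.Icc (0:ℝ) 1, (1 - (1 - π * ρ) ^ n) ^ m = ρ →
      (∀ r' ∈ Set.Icc (0:ℝ) 1, (1 - (1 - π * r') ^ n) ^ m = r' → r' ≤ ρ) →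
      0 < ρ := by
  obtain ⟨hrc0, hrc1⟩ := hrc
  obtain ⟨hπl, hπu⟩ := hπ
  have hnR : (0:ℝ) < (n:ℝ) := by exact_mod_cast Nat.lt_of_lt_of_le Nat.zero_lt_one hn
  set f : ℝ → ℝ := fun r => (1 - (1 - r ^ (1 / (m:ℝ))) ^ (1 / (n:ℝ))) / r with hfdef
  have hf1 : f 1 = 1 := by
    have hne : ((n:ℝ))⁻¹ ≠ 0 := by positivity
    simp [hfdef, Real.one_rpow, Real.zero_rpow hne]
  have hcont : ContinuousOn f (Set.Icc rc 1) := by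
    apply ContinuousOn.div
    · apply ContinuousOn.sub continuousOn_const
      apply ContinuousOn.rpow_const
      · apply ContinuousOn.sub continuousOn_const
        apply ContinuousOn.rpow_const continuousOn_id
        intro x _; right; positivity
      · intro x _; right; positivity
    · exact continuousOn_id
    · intro x hx; exact ne_of_gt (lt_of_lt_of_le hrc0 hx.1)
  have hiv : π ∈ Set.Icc (f rc) (f 1) := ⟨hπl, by rw [hf1]; exact hπu⟩
  obtain ⟨r, hrmem, hfr⟩ := intermediate_value_Icc hrc1 hcont hiv
  have hr0 : 0 < r := lt_of_lt_of_le hrc0 hrmem.1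
  have hr1 : r ≤ 1 := hrmem.2
  have hfix := stmt6_fixed m n hm hn π r hr0 hr1 hfr
  refine ⟨⟨r, hr0, hr1, hfr, hfix⟩, ?_⟩
  intro ρ hρ _ hmax
  exact lt_of_lt_of_le hr0 (hmax r ⟨le_of_lt hr0, hr1⟩ hfix)
end

section
/- For m ≥ 2 and n ≥ 1, the maximal-fixed-point reliability function ρ(π) is discontinuous at π_crit: the left limit of ρ at π_crit is 0 while ρ(π_crit) ≥ r_crit > 0, where r_crit is a minimizer of Π on (0,1]. -/
open Filter

private lemma rpow_nat_inv' (k : ℕ) (hk : 1 ≤ k) (x : ℝ) (hx : 0 ≤ x) :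
    (x ^ k) ^ (1/(k:ℝ)) = x := by
  have hk0 : (k:ℝ) ≠ 0 := Nat.cast_ne_zero.mpr (by omega)
  rw [← Real.rpow_natCast x k, ← Real.rpow_mul hx, mul_one_div,
    div_self hk0, Real.rpow_one]

private lemma nat_pow_rpow_inv (k : ℕ) (hk : 1 ≤ k) (x : ℝ) (hx : 0 ≤ x) :
    (x ^ (1/(k:ℝ))) ^ k = x := by
  have hk0 : (k:ℝ) ≠ 0 := Nat.cast_ne_zero.mpr (by omega)
  rw [← Real.rpow_natCast (x ^ (1/(k:ℝ))) k, ← Real.rpow_mul hx,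
    one_div_mul_cancel hk0, Real.rpow_one]

private lemma fixed_eq (m n : ℕ) (hm : 1 ≤ m) (hn : 1 ≤ n) (π r : ℝ)
    (hπ0 : 0 < π) (hπ1 : π ≤ 1) (hr0 : 0 < r) (hr1 : r ≤ 1)
    (h : (1 - (1 - π * r) ^ n) ^ m = r) :
    π = (1 - (1 - r ^ (1/(m:ℝ))) ^ (1/(n:ℝ))) / r := by
  have hπr0 : 0 < π * r := mul_pos hπ0 hr0
  have hπr1 : π * r ≤ 1 := mul_le_one₀ hπ1 hr0.le hr1
  have ha0 : 0 ≤ 1 - π * r := by linarith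
  have ha1 : 1 - π * r < 1 := by linarith
  have han : (1 - π * r) ^ n < 1 := pow_lt_one₀ ha0 ha1 (by omega)
  have hb0 : 0 ≤ 1 - (1 - π * r) ^ n := by linarith
  have hrm : r ^ (1/(m:ℝ)) = 1 - (1 - π * r) ^ n := by
    nth_rewrite 1 [← h]
    exact rpow_nat_inv' m hm _ hb0
  have han' : (1 - π * r) ^ n = 1 - r ^ (1/(m:ℝ)) := by rw [hrm]; ring
  have ha' : (1 - r ^ (1/(m:ℝ))) ^ (1/(n:ℝ)) = 1 - π * r := by
    rw [← han', rpow_nat_inv' n hn _ ha0]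
  rw [ha', eq_div_iff hr0.ne']
  ring

/-- Phase transition: the maximal-fixed-point reliability `ρ` is discontinuous
at `π_crit = Π(r_crit)`: its left limit at `π_crit` is `0`, while
`ρ(π_crit) ≥ r_crit > 0`, where `r_crit` minimizes `Π` on `(0,1]`. -/
theorem stmt_8 (m n : ℕ) (hm : 2 ≤ m) (hn : 1 ≤ n) (rc : ℝ) (hrc : rc ∈ Set.Ioc (0:ℝ) 1)
    (hmin : ∀ r ∈ Set.Ioc (0:ℝ) 1,
      (1 - (1 - rc ^ (1 / (m:ℝ))) ^ (1 / (n:ℝ))) / rc ≤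
      (1 - (1 - r ^ (1 / (m:ℝ))) ^ (1 / (n:ℝ))) / r)
    (ρ : ℝ → ℝ)
    (hρ : ∀ π ∈ Set.Ioc (0:ℝ) 1,
      ρ π ∈ Set.Icc (0:ℝ) 1 ∧
      (1 - (1 - π * ρ π) ^ n) ^ m = ρ π ∧
      ∀ r ∈ Set.Icc (0:ℝ) 1, (1 - (1 - π * r) ^ n) ^ m = r → r ≤ ρ π) :
    Tendsto ρ
      (nhdsWithin ((1 - (1 - rc ^ (1 / (m:ℝ))) ^ (1 / (n:ℝ))) / rc)
        (Set.Iio ((1 - (1 - rc ^ (1 / (m:ℝ))) ^ (1 / (n:ℝ))) / rc)))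
      (nhds 0) ∧
    rc ≤ ρ ((1 - (1 - rc ^ (1 / (m:ℝ))) ^ (1 / (n:ℝ))) / rc) ∧ 0 < rc := by
  obtain ⟨hrc0, hrc1⟩ := hrc
  have hm1 : 1 ≤ m := by omega
  set πc := (1 - (1 - rc ^ (1 / (m:ℝ))) ^ (1 / (n:ℝ))) / rc with hπc_def
  have hmR : (0:ℝ) < m := by positivity
  have hnR : (0:ℝ) < n := by exact_mod_cast Nat.pos_of_ne_zero (by omega)
  have hrcm : 0 < rc ^ (1/(m:ℝ)) := Real.rpow_pos_of_pos hrc0 _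
  have hrcm1 : rc ^ (1/(m:ℝ)) ≤ 1 := Real.rpow_le_one hrc0.le hrc1 (by positivity)
  have h1 : (0:ℝ) ≤ 1 - rc ^ (1/(m:ℝ)) := by linarith
  have h2 : (1 - rc ^ (1/(m:ℝ))) ^ (1/(n:ℝ)) < 1 :=
    Real.rpow_lt_one h1 (by linarith) (by positivity)
  have hπc0 : 0 < πc := div_pos (by linarith) hrc0
  have hπc1 : πc ≤ 1 := by
    have h3 := hmin 1 ⟨one_pos, le_refl 1⟩
    have h4 : (1 - (1 - (1:ℝ) ^ (1/(m:ℝ))) ^ (1/(n:ℝ))) / 1 = 1 := by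
      rw [Real.one_rpow, sub_self, Real.zero_rpow (one_div_ne_zero hnR.ne'), sub_zero, div_one]
    rw [h4] at h3
    exact h3
  have hfix : (1 - (1 - πc * rc) ^ n) ^ m = rc := by
    have h3 : πc * rc = 1 - (1 - rc ^ (1/(m:ℝ))) ^ (1/(n:ℝ)) :=
      div_mul_cancel₀ _ (ne_of_gt hrc0)
    have h4 : 1 - πc * rc = (1 - rc ^ (1/(m:ℝ))) ^ (1/(n:ℝ)) := by rw [h3]; ring
    rw [h4, nat_pow_rpow_inv n hn _ h1]
    have h5 : 1 - (1 - rc ^ (1/(m:ℝ))) = rc ^ (1/(m:ℝ)) := by ring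
    rw [h5, nat_pow_rpow_inv m hm1 rc hrc0.le]
  have hρc := hρ πc ⟨hπc0, hπc1⟩
  refine ⟨?_, hρc.2.2 rc ⟨hrc0.le, hrc1⟩ hfix, hrc0⟩
  have hev : ∀ᶠ π in nhdsWithin πc (Set.Iio πc), ρ π = 0 := by
    filter_upwards [Ioo_mem_nhdsLT_of_mem (show πc ∈ Set.Ioc 0 πc from ⟨hπc0, le_refl _⟩)]
      with π hπ
    obtain ⟨hπ0, hπlt⟩ := hπ
    have hπ1 : π ≤ 1 := le_trans hπlt.le hπc1
    obtain ⟨⟨hρ0, hρ1⟩, hρfix, -⟩ := hρ π ⟨hπ0, hπ1⟩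
    by_contra hne
    have hρpos : 0 < ρ π := lt_of_le_of_ne hρ0 (Ne.symm hne)
    have hπeq : π = (1 - (1 - (ρ π) ^ (1/(m:ℝ))) ^ (1/(n:ℝ))) / ρ π :=
      fixed_eq m n hm1 hn π (ρ π) hπ0 hπ1 hρpos hρ1 hρfix
    have hge := hmin (ρ π) ⟨hρpos, hρ1⟩
    rw [← hπeq] at hge
    exact absurd hπlt (not_lt.mpr hge)
  exact tendsto_const_nhds.congr' (hev.mono fun x hx => hx.symm)
end

section
/- For the simple task case m = 1 and any n ≥ 1, the maximal fixed point ρ(π) of F(r) = 1 - (1 - πr)^n in [0,1] is a continuous function of π on (0,1). -/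
open Set
set_option maxHeartbeats 1000000

/-- Lipschitz bound for `x ^ n` on `[0,1]`. -/
private lemma pow_lip (n : ℕ) {a b : ℝ} (ha0 : 0 ≤ a) (ha1 : a ≤ 1)
    (hb0 : 0 ≤ b) (hb1 : b ≤ 1) : |a ^ n - b ^ n| ≤ n * |a - b| := by
  induction n with
  | zero => simp
  | succ k ih =>
    have hrw : a ^ (k + 1) - b ^ (k + 1) = a * (a ^ k - b ^ k) + b ^ k * (a - b) := by ring
    have hbk0 : (0:ℝ) ≤ b ^ k := pow_nonneg hb0 k
    have hbk1 : b ^ k ≤ 1 := pow_le_one₀ hb0 hb1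
    calc |a ^ (k + 1) - b ^ (k + 1)|
        = |a * (a ^ k - b ^ k) + b ^ k * (a - b)| := by rw [hrw]
      _ ≤ |a * (a ^ k - b ^ k)| + |b ^ k * (a - b)| := abs_add_le _ _
      _ = |a| * |a ^ k - b ^ k| + |b ^ k| * |a - b| := by rw [abs_mul, abs_mul]
      _ ≤ 1 * (k * |a - b|) + 1 * |a - b| := by
          have h1 : |a| ≤ 1 := abs_le.mpr ⟨by linarith, ha1⟩
          have h2 : |b ^ k| ≤ 1 := abs_le.mpr ⟨by linarith, hbk1⟩
          have hm1 : |a| * |a ^ k - b ^ k| ≤ 1 * (k * |a - b|) :=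
            mul_le_mul h1 ih (abs_nonneg _) zero_le_one
          have hm2 : |b ^ k| * |a - b| ≤ 1 * |a - b| :=
            mul_le_mul_of_nonneg_right h2 (abs_nonneg _)
          linarith
      _ = (k + 1) * |a - b| := by ring
      _ = ((k + 1 : ℕ) : ℝ) * |a - b| := by push_cast; ring

/-- Upper semicontinuity-type bound for the maximal fixed point. -/
private lemma upper_bd (n : ℕ) (ρ : ℝ → ℝ)
    (hρ : ∀ π ∈ Set.Ioo (0:ℝ) 1,
      ρ π ∈ Set.Icc (0:ℝ) 1 ∧
      1 - (1 - π * ρ π) ^ n = ρ π ∧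
      ∀ r ∈ Set.Icc (0:ℝ) 1, 1 - (1 - π * r) ^ n = r → r ≤ ρ π)
    {π₀ : ℝ} (hπ₀ : π₀ ∈ Set.Ioo (0:ℝ) 1) {ε : ℝ} (hε : 0 < ε) :
    ∃ δ > 0, ∀ π ∈ Set.Ioo (0:ℝ) 1, |π - π₀| < δ → ρ π ≤ ρ π₀ + ε := by
  obtain ⟨hmem₀, hfix₀, hmax₀⟩ := hρ π₀ hπ₀
  set ρ₀ := ρ π₀ with hρ₀def
  by_cases hcase : (1:ℝ) ≤ ρ₀ + ε
  · exact ⟨1, one_pos, fun π hπ _ => le_trans (hρ π hπ).1.2 (by linarith)⟩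
  push_neg at hcase
  -- the function h π₀ r = r - 1 + (1 - π₀ r)^n is > 0 on [ρ₀ + ε, 1]
  set h : ℝ → ℝ := fun r => r - 1 + (1 - π₀ * r) ^ n with hdef
  have hcont : Continuous h := by
    apply Continuous.add
    · exact continuous_id.sub continuous_const
    · exact (continuous_const.sub (continuous_const.mul continuous_id)).pow n
  have hρ₀0 : 0 ≤ ρ₀ := hmem₀.1
  have hpos : ∀ w ∈ Icc (ρ₀ + ε) 1, 0 < h w := by
    intro w hw
    by_contra hle
    push_neg at hle
    have h1 : 0 < h 1 := by
      simp only [hdef]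
      have : (0:ℝ) < 1 - π₀ := by linarith [hπ₀.2]
      have := pow_pos this n
      simp only [mul_one]
      linarith
    have : (0:ℝ) ∈ Icc (h w) (h 1) := ⟨hle, le_of_lt h1⟩
    obtain ⟨z, hz, hz0⟩ := intermediate_value_Icc hw.2 hcont.continuousOn this
    have hz01 : z ∈ Icc (0:ℝ) 1 := ⟨le_trans (by linarith [hw.1]) hz.1, hz.2⟩
    have hzfix : 1 - (1 - π₀ * z) ^ n = z := by
      simp only [hdef] at hz0; linarith
    have := hmax₀ z hz01 hzfix
    have : ρ₀ + ε ≤ ρ₀ := le_trans hw.1 (le_trans hz.1 this)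
    linarith
  -- minimum over the compact set
  have hK : IsCompact (Icc (ρ₀ + ε) 1) := isCompact_Icc
  obtain ⟨r₀, hr₀mem, hr₀min⟩ := hK.exists_isMinOn ⟨ρ₀ + ε, le_refl _, le_of_lt hcase⟩
    hcont.continuousOn
  set δ₀ := h r₀ with hδ₀def
  have hδ₀pos : 0 < δ₀ := hpos r₀ hr₀mem
  refine ⟨δ₀ / (n + 1), by positivity, fun π hπ hπδ => ?_⟩
  by_contra hgt
  push_neg at hgt
  obtain ⟨hmem, hfix, _⟩ := hρ π hπ
  have hrK : ρ π ∈ Icc (ρ₀ + ε) 1 := ⟨le_of_lt hgt, hmem.2⟩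
  have hmin : δ₀ ≤ h (ρ π) := hr₀min hrK
  -- but h π (ρ π) = 0 and |h π₀ r - h π r| ≤ n |π - π₀|
  have hb1 : 1 - π₀ * ρ π ∈ Icc (0:ℝ) 1 := by
    constructor
    · nlinarith [hπ₀.1, hπ₀.2, hmem.1, hmem.2]
    · nlinarith [hπ₀.1, hmem.1]
  have hb2 : 1 - π * ρ π ∈ Icc (0:ℝ) 1 := by
    constructor
    · nlinarith [hπ.1, hπ.2, hmem.1, hmem.2]
    · nlinarith [hπ.1, hmem.1]
  have hlip : |(1 - π₀ * ρ π) ^ n - (1 - π * ρ π) ^ n| ≤ n * |π - π₀| := by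
    calc |(1 - π₀ * ρ π) ^ n - (1 - π * ρ π) ^ n|
        ≤ n * |(1 - π₀ * ρ π) - (1 - π * ρ π)| :=
          pow_lip n hb1.1 hb1.2 hb2.1 hb2.2
      _ = n * (|π - π₀| * ρ π) := by
          rw [show (1 - π₀ * ρ π) - (1 - π * ρ π) = (π - π₀) * ρ π by ring,
            abs_mul, abs_of_nonneg hmem.1]
      _ ≤ n * (|π - π₀| * 1) := by gcongr; exact hmem.2
      _ = n * |π - π₀| := by ring
  have hzero : (1 - π * ρ π) ^ n = 1 - ρ π := by linarith
  have hval : h (ρ π) = (1 - π₀ * ρ π) ^ n - (1 - π * ρ π) ^ n := by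
    simp only [hdef]; linarith
  have : δ₀ ≤ n * |π - π₀| := by
    calc δ₀ ≤ h (ρ π) := hmin
      _ ≤ |(1 - π₀ * ρ π) ^ n - (1 - π * ρ π) ^ n| := by rw [hval]; exact le_abs_self _
      _ ≤ n * |π - π₀| := hlip
  have hnlt : (n:ℝ) * |π - π₀| < (n + 1) * (δ₀ / (n + 1)) := by
    have h1 : (n:ℝ) * |π - π₀| ≤ (n + 1) * |π - π₀| := by
      have : (0:ℝ) ≤ |π - π₀| := abs_nonneg _
      nlinarith
    have h2 : ((n:ℝ) + 1) * |π - π₀| < (n + 1) * (δ₀ / (n + 1)) := by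
      apply mul_lt_mul_of_pos_left hπδ
      positivity
    linarith
  rw [mul_div_cancel₀ _ (by positivity : ((n:ℝ) + 1) ≠ 0)] at hnlt
  linarith

/-- Lower semicontinuity-type bound for the maximal fixed point, `n ≥ 2`. -/
private lemma lower_bd (n : ℕ) (hn2 : 2 ≤ n) (ρ : ℝ → ℝ)
    (hρ : ∀ π ∈ Set.Ioo (0:ℝ) 1,
      ρ π ∈ Set.Icc (0:ℝ) 1 ∧
      1 - (1 - π * ρ π) ^ n = ρ π ∧
      ∀ r ∈ Set.Icc (0:ℝ) 1, 1 - (1 - π * r) ^ n = r → r ≤ ρ π)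
    {π₀ : ℝ} (hπ₀ : π₀ ∈ Set.Ioo (0:ℝ) 1) {ε : ℝ} (hε : 0 < ε) :
    ∃ δ > 0, ∀ π ∈ Set.Ioo (0:ℝ) 1, |π - π₀| < δ → ρ π₀ - ε ≤ ρ π := by
  obtain ⟨hmem₀, hfix₀, hmax₀⟩ := hρ π₀ hπ₀
  set ρ₀ := ρ π₀ with hρ₀def
  by_cases hcase : ρ₀ ≤ ε
  · exact ⟨1, one_pos, fun π hπ _ => le_trans (by linarith) (hρ π hπ).1.1⟩
  push_neg at hcase
  set r₁ := ρ₀ - ε with hr₁def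
  have hr₁pos : 0 < r₁ := by linarith
  have hr₁lt : r₁ < ρ₀ := by linarith
  have hρ₀le1 : ρ₀ ≤ 1 := hmem₀.2
  -- strict convexity: (1 - π₀ r₁)^n < 1 - r₁
  set a := 1 - π₀ * ρ₀ with hadef
  have ha0 : 0 ≤ a := by nlinarith [hπ₀.1, hπ₀.2, hmem₀.1]
  have ha1 : a < 1 := by nlinarith [hπ₀.1, hr₁pos]
  have han : a ^ n = 1 - ρ₀ := by rw [hadef]; linarith
  set t := r₁ / ρ₀ with htdef
  have hρ₀pos : 0 < ρ₀ := by linarith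
  have ht0 : 0 < t := div_pos hr₁pos hρ₀pos
  have ht1 : t < 1 := (div_lt_one hρ₀pos).mpr hr₁lt
  have htr : t * ρ₀ = r₁ := div_mul_cancel₀ _ (ne_of_gt hρ₀pos)
  have hconv := (strictConvexOn_pow hn2).2 (mem_Ici.mpr ha0) (mem_Ici.mpr (zero_le_one))
    (ne_of_lt ha1) ht0 (by linarith : (0:ℝ) < 1 - t) (by ring)
  simp only [smul_eq_mul, one_pow, mul_one] at hconv
  have hkey : (1 - π₀ * r₁) ^ n < 1 - r₁ := by
    have heq : t * a + (1 - t) = 1 - π₀ * r₁ := by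
      rw [hadef]; nlinarith [htr]
    rw [← heq]
    calc (t * a + (1 - t)) ^ n < t * a ^ n + (1 - t) := hconv
      _ = 1 - r₁ := by rw [han]; nlinarith [htr]
  set c := (1 - r₁) - (1 - π₀ * r₁) ^ n with hcdef
  have hcpos : 0 < c := by linarith
  refine ⟨c / (n + 1), by positivity, fun π hπ hπδ => ?_⟩
  obtain ⟨hmem, hfix, hmax⟩ := hρ π hπ
  -- show F π has a fixed point ≥ r₁ via IVT
  set h : ℝ → ℝ := fun r => r - 1 + (1 - π * r) ^ n with hdef
  have hcont : Continuous h := by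
    apply Continuous.add
    · exact continuous_id.sub continuous_const
    · exact (continuous_const.sub (continuous_const.mul continuous_id)).pow n
  have hr₁le1 : r₁ ≤ 1 := by linarith
  have hb1 : 1 - π₀ * r₁ ∈ Icc (0:ℝ) 1 := by
    constructor
    · nlinarith [hπ₀.1, hπ₀.2]
    · nlinarith [hπ₀.1]
  have hb2 : 1 - π * r₁ ∈ Icc (0:ℝ) 1 := by
    constructor
    · nlinarith [hπ.1, hπ.2]
    · nlinarith [hπ.1]
  have hlip : |(1 - π * r₁) ^ n - (1 - π₀ * r₁) ^ n| ≤ n * |π - π₀| := by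
    calc |(1 - π * r₁) ^ n - (1 - π₀ * r₁) ^ n|
        ≤ n * |(1 - π * r₁) - (1 - π₀ * r₁)| := pow_lip n hb2.1 hb2.2 hb1.1 hb1.2
      _ = n * (|π - π₀| * r₁) := by
          rw [show (1 - π * r₁) - (1 - π₀ * r₁) = -((π - π₀) * r₁) by ring,
            abs_neg, abs_mul, abs_of_nonneg (le_of_lt hr₁pos)]
      _ ≤ n * (|π - π₀| * 1) := by gcongr
      _ = n * |π - π₀| := by ring
  have hnδ : (n:ℝ) * |π - π₀| < c := by
    have h1 : (n:ℝ) * |π - π₀| ≤ (n + 1) * |π - π₀| := by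
      have : (0:ℝ) ≤ |π - π₀| := abs_nonneg _
      nlinarith
    have h2 : ((n:ℝ) + 1) * |π - π₀| < (n + 1) * (c / (n + 1)) :=
      mul_lt_mul_of_pos_left hπδ (by positivity)
    rw [mul_div_cancel₀ _ (by positivity : ((n:ℝ) + 1) ≠ 0)] at h2
    linarith
  have hhr₁ : h r₁ < 0 := by
    simp only [hdef]
    have : (1 - π * r₁) ^ n ≤ (1 - π₀ * r₁) ^ n + n * |π - π₀| := by
      have := le_abs_self ((1 - π * r₁) ^ n - (1 - π₀ * r₁) ^ n)
      linarith [hlip]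
    linarith
  have hh1 : 0 ≤ h 1 := by
    simp only [hdef, mul_one]
    have : (0:ℝ) < 1 - π := by linarith [hπ.2]
    have := pow_pos this n
    linarith
  have : (0:ℝ) ∈ Icc (h r₁) (h 1) := ⟨le_of_lt hhr₁, hh1⟩
  obtain ⟨z, hz, hz0⟩ := intermediate_value_Icc hr₁le1 hcont.continuousOn this
  have hz01 : z ∈ Icc (0:ℝ) 1 := ⟨le_trans (le_of_lt hr₁pos) hz.1, hz.2⟩
  have hzfix : 1 - (1 - π * z) ^ n = z := by
    simp only [hdef] at hz0; linarith
  exact le_trans hz.1 (hmax z hz01 hzfix)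

/-- In the simple-task case `m = 1`, the maximal-fixed-point reliability
`ρ(π)` of `F(r) = 1 - (1 - π r)^n` is continuous in `π` on `(0,1)`. -/
theorem stmt_9 (n : ℕ) (hn : 1 ≤ n) (ρ : ℝ → ℝ)
    (hρ : ∀ π ∈ Set.Ioo (0:ℝ) 1,
      ρ π ∈ Set.Icc (0:ℝ) 1 ∧
      1 - (1 - π * ρ π) ^ n = ρ π ∧
      ∀ r ∈ Set.Icc (0:ℝ) 1, 1 - (1 - π * r) ^ n = r → r ≤ ρ π) :
    ContinuousOn ρ (Set.Ioo 0 1) := by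
  rcases eq_or_lt_of_le hn with h1 | h2
  · -- n = 1 : the only fixed point is 0, so ρ = 0 on (0,1)
    have hzero : ∀ π ∈ Set.Ioo (0:ℝ) 1, ρ π = 0 := by
      intro π hπ
      obtain ⟨_, hfix, _⟩ := hρ π hπ
      rw [← h1] at hfix
      simp only [pow_one] at hfix
      have hπ1 : π < 1 := hπ.2
      nlinarith
    exact (continuousOn_const (c := (0:ℝ))).congr hzero
  · -- n ≥ 2
    have hn2 : 2 ≤ n := h2
    rw [Metric.continuousOn_iff]
    intro π₀ hπ₀ ε hε
    have hε2 : 0 < ε / 2 := by linarith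
    obtain ⟨δ₁, hδ₁pos, hδ₁⟩ := upper_bd n ρ hρ hπ₀ hε2
    obtain ⟨δ₂, hδ₂pos, hδ₂⟩ := lower_bd n hn2 ρ hρ hπ₀ hε2
    refine ⟨min δ₁ δ₂, lt_min hδ₁pos hδ₂pos, fun π hπ hdist => ?_⟩
    rw [Real.dist_eq] at hdist ⊢
    have h1 : ρ π ≤ ρ π₀ + ε / 2 :=
      hδ₁ π hπ (lt_of_lt_of_le hdist (min_le_left _ _))
    have h2 : ρ π₀ - ε / 2 ≤ ρ π :=
      hδ₂ π hπ (lt_of_lt_of_le hdist (min_le_right _ _))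
    rw [abs_lt]
    constructor <;> linarith
end

section
/- For m = n = 2, the function Π(r) = (1 - (1 - √r)^{1/2}) / r on (0,1] has its minimum at an interior point r_crit ∈ (0,1), and the minimum value π_crit satisfies π_crit < 1 = Π(1). -/
noncomputable def Pi2 (r : ℝ) : ℝ := (1 - (1 - r ^ ((1:ℝ)/2)) ^ ((1:ℝ)/2)) / r

lemma Pi2_sqrt (r : ℝ) : Pi2 r = (1 - Real.sqrt (1 - Real.sqrt r)) / r := by
  unfold Pi2
  rw [← Real.sqrt_eq_rpow, ← Real.sqrt_eq_rpow]

lemma Pi2_one : Pi2 1 = 1 := by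
  simp [Pi2_sqrt]

lemma Pi2_half_lt_one : Pi2 (1/2) < 1 := by
  rw [Pi2_sqrt]
  have h1 : Real.sqrt (1/2) < 3/4 := by
    rw [show (3:ℝ)/4 = Real.sqrt ((3/4)^2) from (Real.sqrt_sq (by norm_num)).symm]
    exact Real.sqrt_lt_sqrt (by norm_num) (by norm_num)
  have h2 : (1:ℝ)/2 < Real.sqrt (1 - Real.sqrt (1/2)) := by
    rw [Real.lt_sqrt (by norm_num)]
    nlinarith
  rw [div_lt_one (by norm_num)]
  linarith

lemma Pi2_ge_one {r : ℝ} (h0 : 0 < r) (h : r ≤ 1/4) : 1 ≤ Pi2 r := by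
  rw [Pi2_sqrt, le_div_iff₀ h0]
  have hs0 : 0 ≤ Real.sqrt r := Real.sqrt_nonneg r
  have hs2 : Real.sqrt r ^ 2 = r := Real.sq_sqrt h0.le
  have hsle : Real.sqrt r ≤ 1/2 := by nlinarith
  have key : Real.sqrt (1 - Real.sqrt r) ≤ 1 - Real.sqrt r ^ 2 := by
    rw [show (1:ℝ) - Real.sqrt r ^ 2 = Real.sqrt ((1 - Real.sqrt r ^ 2)^2) from
      (Real.sqrt_sq (by nlinarith)).symm]
    apply Real.sqrt_le_sqrt
    nlinarith
  nlinarith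

lemma Pi2_contOn : ContinuousOn Pi2 (Set.Icc (1/4 : ℝ) 1) := by
  have h : ContinuousOn (fun r : ℝ => (1 - Real.sqrt (1 - Real.sqrt r)) / r)
      (Set.Icc (1/4 : ℝ) 1) := by
    apply ContinuousOn.div
    · fun_prop
    · fun_prop
    · intro x hx
      have := hx.1
      intro hx0
      rw [hx0] at this
      norm_num at this
  exact h.congr (fun r _ => Pi2_sqrt r)

/-- For `m = n = 2`, the function `Π(r) = (1 - (1 - r^(1/2))^(1/2)) / r`
attains its minimum at an interior point `r_crit ∈ (0,1)`, and the minimum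
value satisfies `π_crit < 1 = Π(1)`. -/
theorem stmt_11 :
    ∃ rc ∈ Set.Ioo (0:ℝ) 1,
      (∀ r ∈ Set.Ioc (0:ℝ) 1,
        (1 - (1 - rc ^ ((1:ℝ)/2)) ^ ((1:ℝ)/2)) / rc ≤
        (1 - (1 - r ^ ((1:ℝ)/2)) ^ ((1:ℝ)/2)) / r) ∧
      (1 - (1 - rc ^ ((1:ℝ)/2)) ^ ((1:ℝ)/2)) / rc < 1 ∧
      (1 - (1 - (1:ℝ) ^ ((1:ℝ)/2)) ^ ((1:ℝ)/2)) / 1 = 1 := by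
  obtain ⟨rc, hrc, hmin⟩ := (isCompact_Icc).exists_isMinOn
    (⟨1, by norm_num⟩ : (Set.Icc (1/4 : ℝ) 1).Nonempty) Pi2_contOn
  have hmin' : ∀ x ∈ Set.Icc (1/4 : ℝ) 1, Pi2 rc ≤ Pi2 x := fun x hx => hmin hx
  have hhalf : Pi2 rc ≤ Pi2 (1/2) := hmin' _ ⟨by norm_num, by norm_num⟩
  have hlt : Pi2 rc < 1 := lt_of_le_of_lt hhalf Pi2_half_lt_one
  have hrc1 : rc < 1 := by
    rcases lt_or_eq_of_le hrc.2 with h | h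
    · exact h
    · rw [h, Pi2_one] at hlt; norm_num at hlt
  refine ⟨rc, ⟨lt_of_lt_of_le (by norm_num) hrc.1, hrc1⟩, ?_, hlt, ?_⟩
  · intro r hr
    show Pi2 rc ≤ Pi2 r
    rcases le_or_gt r (1/4) with h | h
    · exact le_trans hlt.le (Pi2_ge_one hr.1 h)
    · exact hmin' r ⟨h.le, hr.2⟩
  · exact Pi2_one
end
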